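/- arXiv:2409.04868 — 3 statements merged into one kernel-verified Lean document; each statement's English description precedes it below -/
import Mathlib

section
/- Let z ∈ ℝ^L be non-periodic and define the cones C_i(z) = {t ∈ ℝ^L : ‖t − σ_i(z)‖ < ‖t − σ_k(z)‖ for all k ≠ i}. Then σ_j(C_i(z)) = C_{i+j}(z) for all i, j (indices mod L), and the sets C_0(z), ..., C_{L−1}(z) are pairwise disjoint open sets whose union is the complement of the total discriminant Δ_z. -/
/-- Circular shift of a signal in `ℝ^L`. -/
def shift (L : ℕ) [NeZero L] (i : Fin L) (z : EuclideanSpace ℝ (Fin L)) :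
    EuclideanSpace ℝ (Fin L) := WithLp.toLp 2 (fun n => z (n - i))

/-- The open cone `C_i(z)` of points strictly closer to `σ_i(z)` than to any other shift. -/
def cone (L : ℕ) [NeZero L] (z : EuclideanSpace ℝ (Fin L)) (i : Fin L) :
    Set (EuclideanSpace ℝ (Fin L)) :=
  {t | ∀ k : Fin L, k ≠ i → ‖t - shift L i z‖ < ‖t - shift L k z‖}

/-- The discriminant `Δ_z^{i,j}`. -/
def disc (L : ℕ) [NeZero L] (z : EuclideanSpace ℝ (Fin L)) (i j : Fin L) :
    Set (EuclideanSpace ℝ (Fin L)) :=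
  {t | ‖t - shift L i z‖ = ‖t - shift L j z‖ ∧
        ∀ k : Fin L, ‖t - shift L i z‖ ≤ ‖t - shift L k z‖}

/-- The total discriminant `Δ_z`. -/
def totalDisc (L : ℕ) [NeZero L] (z : EuclideanSpace ℝ (Fin L)) :
    Set (EuclideanSpace ℝ (Fin L)) :=
  ⋃ (i : Fin L) (j : Fin L) (_ : i ≠ j), disc L z i j

/-!
Every shift `σ_j` is a linear isometry of `ℝ^L` (it permutes coordinates) and `σ_j ∘ σ_i = σ_{i+j}`,
so `σ_j` maps the points strictly nearest to `σ_i z` onto those strictly nearest to `σ_{i+j} z`.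
A point `t` has a nearest shift `σ_i z` among the finitely many; either it is the unique nearest one,
and `t ∈ C_i`, or a second shift ties with it, and `t ∈ Δ_z`.
-/

namespace shift

variable {L : ℕ} [NeZero L]

lemma eq_piLpCongrLeft (i : Fin L) :
    shift L i = LinearIsometryEquiv.piLpCongrLeft 2 ℝ ℝ (Equiv.addRight i) := by
  funext z
  ext n
  simp [shift, LinearIsometryEquiv.piLpCongrLeft_apply, Equiv.piCongrLeft'_apply, sub_eq_add_neg]

lemma norm_sub_shift (j : Fin L) (a b : EuclideanSpace ℝ (Fin L)) :
    ‖shift L j a - shift L j b‖ = ‖a - b‖ := by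
  rw [eq_piLpCongrLeft, ← map_sub, LinearIsometryEquiv.norm_map]

lemma shift_shift (i j : Fin L) (z : EuclideanSpace ℝ (Fin L)) :
    shift L j (shift L i z) = shift L (i + j) z := by
  ext n
  simp [shift, sub_sub, add_comm j i]

lemma shift_zero (z : EuclideanSpace ℝ (Fin L)) : shift L 0 z = z := by
  ext n
  simp [shift]

end shift

open shift

section cones

variable {L : ℕ} [NeZero L] (z : EuclideanSpace ℝ (Fin L))

lemma shift_mem_cone {i : Fin L} (j : Fin L) {s : EuclideanSpace ℝ (Fin L)}
    (hs : s ∈ cone L z i) : shift L j s ∈ cone L z (i + j) := by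
  have hdist : ∀ m : Fin L, ‖shift L j s - shift L m z‖ = ‖s - shift L (m - j) z‖ := fun m => by
    rw [← norm_sub_shift j s, shift_shift, sub_add_cancel]
  intro k hk
  rw [hdist, hdist, add_sub_cancel_right]
  exact hs _ fun h => hk (by rw [← sub_add_cancel k j, h])

lemma image_shift_cone (i j : Fin L) : shift L j '' cone L z i = cone L z (i + j) := by
  refine Set.Subset.antisymm (Set.image_subset_iff.2 fun s => shift_mem_cone z j) fun t ht => ?_
  refine ⟨shift L (-j) t, by simpa using shift_mem_cone z (-j) ht, ?_⟩
  rw [shift_shift, neg_add_cancel, shift_zero]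

lemma disjoint_cone {i j : Fin L} (hij : i ≠ j) : Disjoint (cone L z i) (cone L z j) :=
  Set.disjoint_left.2 fun _ hti htj => ((hti j hij.symm).trans (htj i hij)).false

lemma isOpen_cone (i : Fin L) : IsOpen (cone L z i) := by
  have hcone : cone L z i = ⋂ k ∈ ({i}ᶜ : Set (Fin L)),
      {t | ‖t - shift L i z‖ < ‖t - shift L k z‖} := by
    ext t
    simp [cone]
  rw [hcone]
  exact (Set.toFinite _).isOpen_biInter fun k _ => isOpen_lt (by fun_prop) (by fun_prop)

lemma cone_subset_compl_totalDisc (i : Fin L) : cone L z i ⊆ (totalDisc L z)ᶜ := by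
  intro t ht htot
  simp only [totalDisc, Set.mem_iUnion] at htot
  obtain ⟨a, b, hab, heq, hmin⟩ := htot
  by_cases ha : a = i
  · subst ha
    exact (heq ▸ ht b (Ne.symm hab)).false
  · exact ((ht a ha).trans_le (hmin i)).false

lemma exists_mem_cone_of_notMem_totalDisc {t : EuclideanSpace ℝ (Fin L)}
    (ht : t ∉ totalDisc L z) : ∃ i, t ∈ cone L z i := by
  obtain ⟨i, hmin⟩ := Finite.exists_min fun k => ‖t - shift L k z‖
  refine ⟨i, fun k hk => (hmin k).lt_of_ne fun heq => ht ?_⟩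
  simp only [totalDisc, Set.mem_iUnion]
  exact ⟨i, k, Ne.symm hk, heq, hmin⟩

lemma iUnion_cone : (⋃ i, cone L z i) = (totalDisc L z)ᶜ :=
  Set.Subset.antisymm (Set.iUnion_subset (cone_subset_compl_totalDisc z))
    fun _ ht => Set.mem_iUnion.2 (exists_mem_cone_of_notMem_totalDisc z ht)

end cones

theorem cones_partition_general (L : ℕ) [NeZero L] (z : EuclideanSpace ℝ (Fin L)) :
    (∀ i j : Fin L, shift L j '' cone L z i = cone L z (i + j)) ∧
    (∀ i j : Fin L, i ≠ j → Disjoint (cone L z i) (cone L z j)) ∧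
    (∀ i : Fin L, IsOpen (cone L z i)) ∧
    (⋃ i : Fin L, cone L z i) = (totalDisc L z)ᶜ :=
  ⟨image_shift_cone z, fun _ _ => disjoint_cone z, isOpen_cone z, iUnion_cone z⟩

/-- The cones `C_i(z)` are permuted by shifts, pairwise disjoint, open, and their union
is the complement of the total discriminant. -/
theorem cones_partition (L : ℕ) [NeZero L] (z : EuclideanSpace ℝ (Fin L))
    (hz : ∀ k : Fin L, k ≠ 0 → shift L k z ≠ z) :
    (∀ i j : Fin L, shift L j '' cone L z i = cone L z (i + j)) ∧
    (∀ i j : Fin L, i ≠ j → Disjoint (cone L z i) (cone L z j)) ∧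
    (∀ i : Fin L, IsOpen (cone L z i)) ∧
    (⋃ i : Fin L, cone L z i) = (totalDisc L z)ᶜ :=
  cones_partition_general L z
end

section
/- Let z, Cz ∈ ℝ^L with C an orthogonal matrix satisfying ‖Cz − z‖ ≤ θ‖z‖, and suppose t ∈ ℝ^L satisfies: σ_ℓ(t) is the closest shift of t to z while t itself is the closest shift of t to Cz. Then 0 ≤ ⟨z, σ_ℓ(t) − t⟩ ≤ 2θ‖z‖·‖t‖. -/
open Matrix
open scoped RealInnerProductSpace

/-- The action of a matrix on a signal in `ℝ^L`. -/
def act (L : ℕ) (C : Matrix (Fin L) (Fin L) ℝ) (z : EuclideanSpace ℝ (Fin L)) :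
    EuclideanSpace ℝ (Fin L) := WithLp.toLp 2 (C.mulVec z)

/-! Shifts are isometries, so both optimality conditions say that one inner product dominates
another: `‖z - σ_ℓ t‖ ≤ ‖z - t‖` gives `⟪z, σ_ℓ t - t⟫ ≥ 0`, and `‖Cz - t‖ ≤ ‖Cz - σ_ℓ t‖`
gives `⟪Cz, σ_ℓ t - t⟫ ≤ 0`. Since `z` is within `θ‖z‖` of `Cz` and `‖σ_ℓ t - t‖ ≤ 2‖t‖`,
Cauchy–Schwarz bounds the difference of the two inner products by `2θ‖z‖‖t‖`. -/

section InnerProductSpace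

variable {E : Type*} [NormedAddCommGroup E] [InnerProductSpace ℝ E]

theorem norm_sub_le_norm_sub_iff_real_inner_le {x a b : E} (hab : ‖a‖ = ‖b‖) :
    ‖x - a‖ ≤ ‖x - b‖ ↔ ⟪x, b⟫ ≤ ⟪x, a⟫ := by
  rw [← sq_le_sq₀ (norm_nonneg _) (norm_nonneg _), norm_sub_sq_real, norm_sub_sq_real, hab]
  constructor <;> intro h <;> linarith

theorem real_inner_sub_le_of_real_inner_sub_nonpos {z w s t : E} {ε : ℝ}
    (hw : ⟪w, s - t⟫ ≤ 0) (hzw : ‖z - w‖ ≤ ε) (hst : ‖s‖ = ‖t‖) :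
    ⟪z, s - t⟫ ≤ 2 * ε * ‖t‖ := by
  have hsub : ‖s - t‖ ≤ 2 * ‖t‖ := by
    calc ‖s - t‖ ≤ ‖s‖ + ‖t‖ := norm_sub_le _ _
      _ = 2 * ‖t‖ := by rw [hst]; ring
  calc ⟪z, s - t⟫ = ⟪w, s - t⟫ + ⟪z - w, s - t⟫ := by rw [inner_sub_left]; ring
    _ ≤ ‖z - w‖ * ‖s - t‖ := by linarith [real_inner_le_norm (z - w) (s - t)]
    _ ≤ ε * (2 * ‖t‖) := by gcongr; exact (norm_nonneg _).trans hzw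
    _ = 2 * ε * ‖t‖ := by ring

end InnerProductSpace

section Shift

variable {L : ℕ} [NeZero L]

theorem shift_eq_piLpCongrLeft (i : Fin L) (z : EuclideanSpace ℝ (Fin L)) :
    shift L i z = LinearIsometryEquiv.piLpCongrLeft 2 ℝ ℝ (Equiv.addRight i) z := by
  ext n
  simp [shift, LinearIsometryEquiv.piLpCongrLeft_apply, Equiv.piCongrLeft'_apply, sub_eq_add_neg]

@[simp]
theorem norm_shift (i : Fin L) (z : EuclideanSpace ℝ (Fin L)) : ‖shift L i z‖ = ‖z‖ := by
  rw [shift_eq_piLpCongrLeft, LinearIsometryEquiv.norm_map]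

@[simp]
theorem shift_zero (z : EuclideanSpace ℝ (Fin L)) : shift L 0 z = z := by
  ext n
  simp [shift]

end Shift

theorem inner_bound_near_discriminant_general (L : ℕ) [NeZero L]
    (C : Matrix (Fin L) (Fin L) ℝ)
    (θ : ℝ) (z t : EuclideanSpace ℝ (Fin L))
    (hclose : ‖act L C z - z‖ ≤ θ * ‖z‖)
    (ℓ : Fin L)
    (hz : ∀ k : Fin L, ‖z - shift L ℓ t‖ ≤ ‖z - shift L k t‖)
    (hCz : ∀ k : Fin L, ‖act L C z - t‖ ≤ ‖act L C z - shift L k t‖) :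
    0 ≤ ⟪z, shift L ℓ t - t⟫ ∧ ⟪z, shift L ℓ t - t⟫ ≤ 2 * θ * ‖z‖ * ‖t‖ := by
  have hz₀ : ⟪z, t⟫ ≤ ⟪z, shift L ℓ t⟫ :=
    (norm_sub_le_norm_sub_iff_real_inner_le (norm_shift ℓ t)).mp (by simpa using hz 0)
  have hCzℓ : ⟪act L C z, shift L ℓ t⟫ ≤ ⟪act L C z, t⟫ :=
    (norm_sub_le_norm_sub_iff_real_inner_le (norm_shift ℓ t).symm).mp (hCz ℓ)
  refine ⟨by rw [inner_sub_right]; linarith, ?_⟩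
  calc ⟪z, shift L ℓ t - t⟫ ≤ 2 * (θ * ‖z‖) * ‖t‖ :=
        real_inner_sub_le_of_real_inner_sub_nonpos (by rw [inner_sub_right]; linarith)
          (by rwa [norm_sub_rev] at hclose) (norm_shift ℓ t)
    _ = 2 * θ * ‖z‖ * ‖t‖ := by ring

/-- If `σ_ℓ(t)` is the shift of `t` closest to `z` while `t` itself is the shift of `t`
closest to `Cz`, where `C` is orthogonal with `‖Cz − z‖ ≤ θ‖z‖`, then
`0 ≤ ⟨z, σ_ℓ(t) − t⟩ ≤ 2θ‖z‖‖t‖`. -/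
theorem inner_bound_near_discriminant (L : ℕ) [NeZero L]
    (C : Matrix (Fin L) (Fin L) ℝ) (horth : C * Cᵀ = 1)
    (θ : ℝ) (z t : EuclideanSpace ℝ (Fin L))
    (hclose : ‖act L C z - z‖ ≤ θ * ‖z‖)
    (ℓ : Fin L)
    (hz : ∀ k : Fin L, ‖z - shift L ℓ t‖ ≤ ‖z - shift L k t‖)
    (hCz : ∀ k : Fin L, ‖act L C z - t‖ ≤ ‖act L C z - shift L k t‖) :
    0 ≤ ⟪z, shift L ℓ t - t⟫ ∧ ⟪z, shift L ℓ t - t⟫ ≤ 2 * θ * ‖z‖ * ‖t‖ :=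
  inner_bound_near_discriminant_general L C θ z t hclose ℓ hz hCz
end

section
/- Let L be odd, let z ∈ ℝ^L be a nonzero signal with zero mean, and let u ∈ {−1,1}^L define z_u via ẑ_u = u ⊙ ẑ in the Fourier domain with u circularly symmetric (u[k] = u[−k mod L]). Then z_u ∈ ℝ^L and for every i, ‖z_u − σ_i(z)‖ = ‖z_u − σ_{−i}(z)‖ whenever z has zero Fourier phases (ẑ real-valued). -/
/-- The discrete Fourier transform of a real signal. -/
noncomputable def dft (L : ℕ) (x : EuclideanSpace ℝ (Fin L)) (m : Fin L) : ℂ :=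
  ∑ n : Fin L, (x n : ℂ) * Complex.exp (2 * Real.pi * Complex.I * (n.val : ℂ) * (m.val : ℂ) / L)


/-! A real signal has real DFT exactly when it is fixed by the reflection `n ↦ -n`: conjugating
the DFT of a real signal gives the DFT of its reflection. Since `ẑ` is real, so is `ŵ = u ⊙ ẑ`,
hence both `z` and `w` are fixed by the reflection. The reflection is an isometry and turns
`σ_i` into `σ_{-i}`, so it maps `w - σ_i z` onto `w - σ_{-i} z`. -/

open scoped ZMod

lemma ZMod.conj_dft_apply {N : ℕ} [NeZero N] (Φ : ZMod N → ℂ) (k : ZMod N) :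
    starRingEnd ℂ (𝓕 Φ k) = 𝓕 (fun j ↦ starRingEnd ℂ (Φ j)) (-k) := by
  simp only [ZMod.dft_apply, map_sum, smul_eq_mul, map_mul, ← AddChar.map_neg_eq_conj, mul_neg,
    neg_neg]

lemma ZMod.even_of_conj_dft_eq {N : ℕ} [NeZero N] {Φ : ZMod N → ℂ}
    (hΦ : ∀ j, starRingEnd ℂ (Φ j) = Φ j) (hdft : ∀ k, starRingEnd ℂ (𝓕 Φ k) = 𝓕 Φ k) :
    Φ.Even := by
  refine ZMod.dft_even_iff.mp fun k ↦ ?_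
  rw [← hdft k, ZMod.conj_dft_apply, funext hΦ]

lemma ZMod.finEquiv_apply (L : ℕ) [NeZero L] (k : Fin L) :
    ZMod.finEquiv L k = (k.val : ZMod L) := by
  cases L with
  | zero => exact absurd rfl (NeZero.ne 0)
  | succ N => exact (ZMod.natCast_zmod_val (n := N + 1) k).symm

-- `dft` has kernel `e^{+2πinm/L}` and `ZMod.dft` has kernel `e^{-2πijk/N}`, hence `-m`.
lemma dft_eq_zmod_dft (L : ℕ) [NeZero L] (x : EuclideanSpace ℝ (Fin L)) (m : Fin L) :
    dft L x m =
      𝓕 (fun j ↦ (x ((ZMod.finEquiv L).symm j) : ℂ)) (-ZMod.finEquiv L m) := by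
  rw [ZMod.dft_apply, ← (ZMod.finEquiv L).toEquiv.sum_comp]
  refine Finset.sum_congr rfl fun n _ ↦ ?_
  simp only [RingEquiv.toEquiv_eq_coe, EquivLike.coe_coe, RingEquiv.symm_apply_apply, mul_neg,
    neg_neg, smul_eq_mul]
  rw [ZMod.finEquiv_apply, ZMod.finEquiv_apply, ← Nat.cast_mul, ZMod.stdAddChar_apply,
    ZMod.toCircle_natCast, mul_comm]
  push_cast
  ring_nf

noncomputable def reflect (L : ℕ) [NeZero L] :
    EuclideanSpace ℝ (Fin L) ≃ₗᵢ[ℝ] EuclideanSpace ℝ (Fin L) :=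
  LinearIsometryEquiv.piLpCongrLeft 2 ℝ ℝ (Equiv.neg (Fin L))

section reflect

variable {L : ℕ} [NeZero L]

@[simp]
lemma reflect_apply (x : EuclideanSpace ℝ (Fin L)) (n : Fin L) : reflect L x n = x (-n) := rfl

lemma reflect_shift (i : Fin L) (z : EuclideanSpace ℝ (Fin L)) :
    reflect L (shift L i z) = shift L (-i) (reflect L z) := by
  ext n
  simp only [shift, reflect_apply, PiLp.toLp_apply]
  rw [sub_neg_eq_add, neg_add']

open Fin.CommRing in
lemma reflect_eq_self_of_dft_im_eq_zero {x : EuclideanSpace ℝ (Fin L)}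
    (h : ∀ k, (dft L x k).im = 0) : reflect L x = x := by
  set e := ZMod.finEquiv L
  have hEven : Function.Even fun j ↦ (x (e.symm j) : ℂ) := by
    refine ZMod.even_of_conj_dft_eq (fun j ↦ Complex.conj_ofReal _) fun k ↦ ?_
    have hk := dft_eq_zmod_dft L x (e.symm (-k))
    rw [RingEquiv.apply_symm_apply, neg_neg] at hk
    rw [← hk, Complex.conj_eq_iff_im]
    exact h _
  ext n
  simpa only [reflect_apply, map_neg, RingEquiv.symm_apply_apply, Complex.ofReal_inj]
    using hEven (e n)

end reflect

theorem signFlip_equidistant_general (L : ℕ) [NeZero L]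
    (z : EuclideanSpace ℝ (Fin L))
    (hphase : ∀ k : Fin L, (dft L z k).im = 0)
    (u : Fin L → ℝ)
    (w : EuclideanSpace ℝ (Fin L)) (hw : ∀ k : Fin L, dft L w k = (u k : ℂ) * dft L z k) :
    ∀ i : Fin L, ‖w - shift L i z‖ = ‖w - shift L (-i) z‖ := by
  have hz_even : reflect L z = z := reflect_eq_self_of_dft_im_eq_zero hphase
  have hw_even : reflect L w = w := reflect_eq_self_of_dft_im_eq_zero fun k ↦ by
    rw [hw, Complex.im_ofReal_mul, hphase, mul_zero]
  intro i
  rw [← (reflect L).norm_map, map_sub, reflect_shift, hz_even, hw_even]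

/-- Sign-flipping Fourier modes of a zero-phase signal by a circularly symmetric `±1`
vector produces a signal equidistant to `σ_i(z)` and `σ_{−i}(z)` for every `i`. -/
theorem signFlip_equidistant (L : ℕ) [NeZero L] (hodd : Odd L)
    (z : EuclideanSpace ℝ (Fin L)) (hz : z ≠ 0)
    (hmean : ∑ n : Fin L, z n = 0)
    (hphase : ∀ k : Fin L, (dft L z k).im = 0)
    (u : Fin L → ℝ) (hu : ∀ k : Fin L, u k = 1 ∨ u k = -1)
    (husym : ∀ k : Fin L, u (-k) = u k)
    (w : EuclideanSpace ℝ (Fin L)) (hw : ∀ k : Fin L, dft L w k = (u k : ℂ) * dft L z k) :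
    ∀ i : Fin L, ‖w - shift L i z‖ = ‖w - shift L (-i) z‖ :=
  signFlip_equidistant_general L z hphase u w hw
end
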